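/- arXiv:1602.02068 — 9 statements merged into one kernel-verified Lean document; each statement's English description precedes it below -/
import Mathlib

section
/- The Euclidean projection of a vector z ∈ ℝ^K onto the probability simplex has the componentwise form [z_i − τ]_+ for a unique threshold τ ∈ ℝ satisfying ∑_j [z_j − τ]_+ = 1. -/
open Finset

def simplex (K : ℕ) : Set (Fin K → ℝ) :=
  {p | (∑ i, p i) = 1 ∧ ∀ i, 0 ≤ p i}

def IsSparsemax {K : ℕ} (z p : Fin K → ℝ) : Prop :=
  p ∈ simplex K ∧ ∀ q ∈ simplex K, (∑ i, (p i - z i) ^ 2) ≤ ∑ i, (q i - z i) ^ 2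

theorem stmt0 {K : ℕ} (hK : 0 < K) (z p : Fin K → ℝ) (h : IsSparsemax z p) :
    ∃! τ : ℝ, (∀ i, p i = max 0 (z i - τ)) ∧ (∑ j, max 0 (z j - τ)) = 1 := by
  obtain ⟨⟨hsum, hnn⟩, hopt⟩ := h
  -- key variational inequality
  have key : ∀ i j : Fin K, 0 < p i → z j - p j ≤ z i - p i := by
    intro i j hpi
    by_cases hij : i = j
    · subst hij; exact le_rfl
    · by_contra hlt
      push_neg at hlt
      set c : ℝ := (p j - z j) - (p i - z i) with hc
      have hcneg : c < 0 := by simp only [hc]; linarith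
      set ε : ℝ := min (p i) (-c / 2) with hε
      have hεpos : 0 < ε := lt_min hpi (by linarith)
      have hεle : ε ≤ p i := min_le_left _ _
      have hεle2 : ε ≤ -c / 2 := min_le_right _ _
      set q : Fin K → ℝ := fun k =>
        p k + ((if k = j then ε else 0) - (if k = i then ε else 0)) with hq
      have hqmem : q ∈ simplex K := by
        constructor
        · have : (∑ k, q k) = (∑ k, p k) + ((∑ k, if k = j then ε else 0)
              - (∑ k, if k = i then ε else 0)) := by
            simp [hq, Finset.sum_add_distrib, Finset.sum_sub_distrib]
          rw [this, Finset.sum_ite_eq' Finset.univ j (fun _ => ε),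
            Finset.sum_ite_eq' Finset.univ i (fun _ => ε)]
          simp [hsum]
        · intro k
          have hqk : q k = p k + ((if k = j then ε else 0) - (if k = i then ε else 0)) := rfl
          by_cases hkj : k = j
          · have hki : ¬ k = i := fun hh => hij (hh ▸ hkj)
            rw [hqk, if_pos hkj, if_neg hki]
            linarith [hnn k, hεpos.le]
          · by_cases hki : k = i
            · rw [hqk, if_neg hkj, if_pos hki, hki]
              linarith
            · rw [hqk, if_neg hkj, if_neg hki]
              linarith [hnn k]
      have hpt : ∀ k, (q k - z k) ^ 2 = (p k - z k) ^ 2 +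
          ((if k = j then 2 * (p j - z j) * ε + ε ^ 2 else 0) +
           (if k = i then -(2 * (p i - z i) * ε) + ε ^ 2 else 0)) := by
        intro k
        have hqk : q k = p k + ((if k = j then ε else 0) - (if k = i then ε else 0)) := rfl
        by_cases hkj : k = j
        · have hki : ¬ k = i := fun hh => hij (hh ▸ hkj)
          rw [hqk, if_pos hkj, if_neg hki, if_pos hkj, if_neg hki, hkj]
          ring
        · by_cases hki : k = i
          · rw [hqk, if_neg hkj, if_pos hki, if_neg hkj, if_pos hki, hki]
            ring
          · rw [hqk, if_neg hkj, if_neg hki, if_neg hkj, if_neg hki]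
            ring
      have hsumq : (∑ k, (q k - z k) ^ 2) =
          (∑ k, (p k - z k) ^ 2) + (2 * ε * c + 2 * ε ^ 2) := by
        calc (∑ k, (q k - z k) ^ 2)
            = ∑ k, ((p k - z k) ^ 2 +
              ((if k = j then 2 * (p j - z j) * ε + ε ^ 2 else 0) +
               (if k = i then -(2 * (p i - z i) * ε) + ε ^ 2 else 0))) :=
              Finset.sum_congr rfl (fun k _ => hpt k)
          _ = (∑ k, (p k - z k) ^ 2) +
              ((∑ k, if k = j then 2 * (p j - z j) * ε + ε ^ 2 else 0) +
               (∑ k, if k = i then -(2 * (p i - z i) * ε) + ε ^ 2 else 0)) := by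
              rw [Finset.sum_add_distrib, Finset.sum_add_distrib]
          _ = (∑ k, (p k - z k) ^ 2) + (2 * ε * c + 2 * ε ^ 2) := by
              rw [Finset.sum_ite_eq' Finset.univ j, Finset.sum_ite_eq' Finset.univ i]
              simp only [Finset.mem_univ, if_pos, hc]
              ring
      have hle := hopt q hqmem
      rw [hsumq] at hle
      have h1 : 0 ≤ 2 * ε * c + 2 * ε ^ 2 := by linarith
      have h2 : 0 ≤ c + ε := by nlinarith
      linarith
  -- exists i0 with p i0 > 0
  have hex : ∃ i0 : Fin K, 0 < p i0 := by
    by_contra h'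
    push_neg at h'
    have : (∑ i, p i) ≤ 0 := Finset.sum_nonpos (fun i _ => h' i)
    linarith
  obtain ⟨i0, hi0⟩ := hex
  refine ⟨z i0 - p i0, ⟨?_, ?_⟩, ?_⟩
  · intro i
    have hub : z i - p i ≤ z i0 - p i0 := key i0 i hi0
    rcases (hnn i).lt_or_eq with hpos | hzero
    · have hlb : z i0 - p i0 ≤ z i - p i := key i i0 hpos
      have : z i - p i = z i0 - p i0 := le_antisymm hub hlb
      have hval : z i - (z i0 - p i0) = p i := by linarith
      rw [hval, max_eq_right hpos.le]
    · rw [← hzero] at hub ⊢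
      have : z i - (z i0 - p i0) ≤ 0 := by linarith
      rw [max_eq_left this]
  · have : ∀ i ∈ Finset.univ, max 0 (z i - (z i0 - p i0)) = p i := by
      intro i _
      have hub : z i - p i ≤ z i0 - p i0 := key i0 i hi0
      rcases (hnn i).lt_or_eq with hpos | hzero
      · have hlb : z i0 - p i0 ≤ z i - p i := key i i0 hpos
        have hval : z i - (z i0 - p i0) = p i := by linarith
        rw [hval, max_eq_right hpos.le]
      · rw [← hzero] at hub ⊢
        have : z i - (z i0 - p i0) ≤ 0 := by linarith
        rw [max_eq_left this]
    rw [Finset.sum_congr rfl this, hsum]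
  · rintro y ⟨hy1, _⟩
    have := hy1 i0
    rcases le_or_gt (z i0 - y) 0 with hle | hlt
    · rw [max_eq_left hle] at this; linarith
    · rw [max_eq_right hlt.le] at this; linarith
end

section
/- Let z_{(1)} ≥ … ≥ z_{(K)} be the sorted coordinates of z and k(z) := max{k ∈ [K] : 1 + k·z_{(k)} > ∑_{j≤k} z_{(j)}}. Then the support size of sparsemax(z) equals k(z), and τ(z) = ((∑_{j≤k(z)} z_{(j)}) − 1)/k(z). -/
open Finset

/-
Sorting the scores once and for all, write `w k = z (σ k)`, so that `w` is antitone and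
`∑ k, max 0 (w k - τ) = 1`. The test `1 + (k + 1) w k > ∑_{j ≤ k} w j` reads
`∑_{j ≤ k} (w j - w k) < 1`, and this holds exactly when `τ < w k`: if `τ < w k`, the left side
is strictly below `∑_{j ≤ k} max 0 (w j - τ) ≤ 1`; if `w k ≤ τ`, every coordinate after `k` is
clipped to `0`, so the left side dominates `∑_{j ≤ k} max 0 (w j - τ) = 1`. Hence the indices
passing the test are those in the support, which form the initial segment `Iic k(z)`, and summing
`w j - τ = p (σ j)` over it gives the formula for `τ`.
-/

section Threshold

variable {ι : Type*} [Fintype ι] [LinearOrder ι] [LocallyFiniteOrderBot ι] {w : ι → ℝ} {τ : ℝ}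

lemma sum_Iic_posPart_sub_eq_one (hsum : ∑ j, max 0 (w j - τ) = 1) {k : ι}
    (hk : ∀ j, τ < w j → j ≤ k) : ∑ j ∈ Iic k, max 0 (w j - τ) = 1 := by
  rw [← hsum]
  refine sum_subset (subset_univ _) fun j _ hj => max_eq_left ?_
  have : ¬τ < w j := fun hτj => hj (mem_Iic.2 (hk j hτj))
  linarith

lemma sum_Iic_sub_eq_one (hsum : ∑ j, max 0 (w j - τ) = 1) {k : ι}
    (hk : ∀ j, τ < w j ↔ j ≤ k) : ∑ j ∈ Iic k, (w j - τ) = 1 := by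
  rw [← sum_Iic_posPart_sub_eq_one hsum fun j => (hk j).1]
  refine sum_congr rfl fun j hj => (max_eq_right ?_).symm
  linarith [(hk j).2 (mem_Iic.1 hj)]

theorem sum_Iic_sub_lt_one_iff (hw : Antitone w) (hsum : ∑ j, max 0 (w j - τ) = 1) (k : ι) :
    ∑ j ∈ Iic k, (w j - w k) < 1 ↔ τ < w k := by
  constructor
  · intro hlt
    by_contra! hle
    have hclip : ∀ j, τ < w j → j ≤ k := fun j hj => by
      by_contra! hkj
      linarith [hw hkj.le]
    have : 1 ≤ ∑ j ∈ Iic k, (w j - w k) :=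
      calc 1 = ∑ j ∈ Iic k, max 0 (w j - τ) := (sum_Iic_posPart_sub_eq_one hsum hclip).symm
        _ ≤ ∑ j ∈ Iic k, (w j - w k) := sum_le_sum fun j hj =>
          max_le (sub_nonneg.2 (hw (mem_Iic.1 hj))) (by linarith)
    linarith
  · intro hτk
    calc ∑ j ∈ Iic k, (w j - w k) < ∑ j ∈ Iic k, max 0 (w j - τ) :=
          sum_lt_sum_of_nonempty ⟨k, mem_Iic.2 le_rfl⟩ fun j _ =>
            lt_max_of_lt_right (by linarith)
      _ ≤ ∑ j, max 0 (w j - τ) := sum_le_univ_sum_of_nonneg fun _ => le_max_left _ _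
      _ = 1 := hsum

end Threshold

lemma Fin.sum_Iic_sub_const {K : ℕ} (f : Fin K → ℝ) (k : Fin K) (c : ℝ) :
    ∑ j ∈ Iic k, (f j - c) = ∑ j ∈ Iic k, f j - ((k : ℕ) + 1) * c := by
  rw [sum_sub_distrib, Finset.sum_const, Fin.card_Iic, nsmul_eq_mul]
  push_cast
  ring

theorem stmt2 {K : ℕ} (z p : Fin K → ℝ) (τ : ℝ) (σ : Equiv.Perm (Fin K))
    (hsort : ∀ i j : Fin K, i ≤ j → z (σ j) ≤ z (σ i))
    (h : IsSparsemax z p) (hτ : ∀ i, p i = max 0 (z i - τ))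
    (kz : Fin K)
    (hk : 1 + ((kz : ℕ) + 1 : ℝ) * z (σ kz) > ∑ j ∈ Finset.Iic kz, z (σ j))
    (hmax : ∀ k : Fin K,
      (1 + ((k : ℕ) + 1 : ℝ) * z (σ k) > ∑ j ∈ Finset.Iic k, z (σ j)) → k ≤ kz) :
    (Finset.univ.filter (fun j => 0 < p j)).card = (kz : ℕ) + 1 ∧
    τ = ((∑ j ∈ Finset.Iic kz, z (σ j)) - 1) / ((kz : ℕ) + 1) := by
  have hsum : ∑ j, max 0 (z (σ j) - τ) = 1 := by
    rw [Equiv.sum_comp σ fun i => max 0 (z i - τ), ← h.1.1]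
    exact sum_congr rfl fun i _ => (hτ i).symm
  have htest : ∀ k : Fin K,
      1 + ((k : ℕ) + 1 : ℝ) * z (σ k) > ∑ j ∈ Iic k, z (σ j) ↔ τ < z (σ k) := fun k => by
    rw [← sum_Iic_sub_lt_one_iff hsort hsum, Fin.sum_Iic_sub_const]
    constructor <;> intro <;> linarith
  have hsupp : ∀ k, τ < z (σ k) ↔ k ≤ kz := fun k =>
    ⟨fun hτk => hmax k ((htest k).2 hτk), fun hle => ((htest kz).1 hk).trans_le (hsort k kz hle)⟩
  have hsupport : univ.filter (fun j => 0 < p j) = (Iic kz).map σ.toEmbedding := by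
    ext j
    rw [mem_map_equiv, mem_Iic, ← hsupp, Equiv.apply_symm_apply, mem_filter, hτ, lt_max_iff]
    simp
  refine ⟨by rw [hsupport, card_map, Fin.card_Iic], ?_⟩
  have hτsum := sum_Iic_sub_eq_one hsum hsupp
  rw [Fin.sum_Iic_sub_const, sub_eq_iff_eq_add] at hτsum
  rw [hτsum, eq_div_iff (by positivity)]
  ring
end

section
/- For any z ∈ ℝ^K, let A(z) be the set of maximal coordinates of z and γ(z) := max_k z_k − max_{k ∉ A(z)} z_k (the gap to the second largest value, assuming A(z) ≠ [K]). For every ε with 0 < ε ≤ γ(z)·|A(z)|, sparsemax(z/ε) equals the uniform distribution over A(z), i.e., 𝟙_{A(z)}/|A(z)|. -/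
open Finset

theorem stmt5 {K : ℕ} (z : Fin K → ℝ)
    (h1 : (Finset.univ : Finset (Fin K)).Nonempty)
    (A : Finset (Fin K)) (hA : A = Finset.univ.filter (fun k => ∀ j, z j ≤ z k))
    (h2 : (Finset.univ \ A).Nonempty)
    (γ : ℝ)
    (hγ : γ = Finset.univ.sup' h1 z - (Finset.univ \ A).sup' h2 z)
    (ε : ℝ) (hε0 : 0 < ε) (hε : ε ≤ γ * A.card) :
    IsSparsemax (fun i => z i / ε)
      (fun i => if i ∈ A then (1 : ℝ) / A.card else 0) := by
  set M := Finset.univ.sup' h1 z with hM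
  have hAne : A.Nonempty := by
    obtain ⟨k, -, hk⟩ := Finset.exists_mem_eq_sup' h1 z
    exact ⟨k, by simp [hA]; intro j; rw [← hk]; exact Finset.le_sup' z (Finset.mem_univ j)⟩
  have hc : (0:ℝ) < (A.card : ℝ) := by exact_mod_cast Finset.card_pos.mpr hAne
  have hzA : ∀ i ∈ A, z i = M := by
    intro i hi
    rw [hA, Finset.mem_filter] at hi
    exact le_antisymm (Finset.le_sup' z (Finset.mem_univ i))
      (Finset.sup'_le h1 z fun j _ => hi.2 j)
  have hzB : ∀ i ∈ Finset.univ \ A, z i ≤ M - γ := by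
    intro i hi
    have := Finset.le_sup' z hi
    linarith [hγ]
  have hγpos : 0 < γ := by nlinarith
  constructor
  · constructor
    · have : (∑ i, (if i ∈ A then (1:ℝ) / A.card else 0)) = ∑ i ∈ A, (1:ℝ)/A.card := by
        rw [Finset.sum_ite_mem, Finset.univ_inter]
      rw [this, Finset.sum_const, nsmul_eq_mul]
      field_simp
    · intro i; dsimp only; split <;> positivity
  · rintro q ⟨hq1, hq2⟩
    set p : Fin K → ℝ := fun i => if i ∈ A then (1:ℝ) / A.card else 0 with hp
    set QA := ∑ i ∈ A, q i with hQA
    set QB := ∑ i ∈ Finset.univ \ A, q i with hQB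
    have hsum : QB + QA = 1 := by
      rw [hQA, hQB, Finset.sum_sdiff (Finset.subset_univ A), hq1]
    have hQBnn : 0 ≤ QB := Finset.sum_nonneg fun i _ => hq2 i
    have key : 0 ≤ ∑ i, (p i - z i / ε) * (q i - p i) := by
      rw [← Finset.sum_sdiff (Finset.subset_univ A)]
      have eA : ∑ i ∈ A, (p i - z i / ε) * (q i - p i)
          = (1/(A.card:ℝ) - M/ε) * (QA - 1) := by
        have hterm : ∀ i ∈ A, (p i - z i / ε) * (q i - p i)
            = (1/(A.card:ℝ) - M/ε) * q i - (1/(A.card:ℝ) - M/ε) * (1/(A.card:ℝ)) := by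
          intro i hi
          rw [hp]; simp only [if_pos hi, hzA i hi]; ring
        rw [Finset.sum_congr rfl hterm, Finset.sum_sub_distrib, ← Finset.mul_sum,
          Finset.sum_const, nsmul_eq_mul, ← hQA]
        have h1c : ((A.card:ℝ)) * ((1/(A.card:ℝ) - M/ε) * (1/(A.card:ℝ)))
            = 1/(A.card:ℝ) - M/ε := by field_simp
        rw [h1c]; ring
      have eB : (-(M - γ)/ε) * QB ≤ ∑ i ∈ Finset.univ \ A, (p i - z i / ε) * (q i - p i) := by
        rw [hQB, Finset.mul_sum]
        apply Finset.sum_le_sum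
        intro i hi
        have hi' : i ∉ A := (Finset.mem_sdiff.mp hi).2
        have hz1 := hzB i hi
        have hq1' := hq2 i
        rw [hp]; simp only [if_neg hi']
        calc -(M - γ)/ε * q i = ((-(M - γ)) * q i)/ε := by ring
          _ ≤ ((-(z i)) * q i)/ε := by gcongr
          _ = (0 - z i / ε) * (q i - 0) := by ring
      have hfin : 0 ≤ (-(M - γ)/ε) * QB + (1/(A.card:ℝ) - M/ε) * (QA - 1) := by
        have hQA1 : QA - 1 = -QB := by linarith
        rw [hQA1]
        have heq : (-(M - γ)/ε) * QB + (1/(A.card:ℝ) - M/ε) * (-QB)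
            = QB * ((γ * (A.card:ℝ) - ε)/(ε * (A.card:ℝ))) := by
          field_simp; ring
        rw [heq]
        exact mul_nonneg hQBnn (div_nonneg (by linarith) (by positivity))
      linarith [eB, eA.ge, eA.le]
    show (∑ i, (p i - z i / ε)^2) ≤ ∑ i, (q i - z i / ε)^2
    have expand : ∑ i, (q i - z i / ε)^2
        = ∑ i, ((p i - z i / ε)^2 + ((q i - p i)^2 + 2*((p i - z i / ε)*(q i - p i)))) :=
      Finset.sum_congr rfl fun i _ => by ring
    rw [Finset.sum_add_distrib, Finset.sum_add_distrib, ← Finset.mul_sum] at expand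
    have hsq : 0 ≤ ∑ i, (q i - p i)^2 := Finset.sum_nonneg fun i _ => sq_nonneg _
    linarith [expand.ge]
end

section
/- sparsemax is monotone and 1-Lipschitz over coordinate pairs: if z_i ≤ z_j, then 0 ≤ sparsemax_j(z) − sparsemax_i(z) ≤ z_j − z_i. -/
open Finset

lemma sparsemax_key {K : ℕ} (z p : Fin K → ℝ) (h : IsSparsemax z p)
    (i j : Fin K) (hne : i ≠ j) (hpj : 0 < p j) : p j - z j ≤ p i - z i := by
  by_contra hlt
  push_neg at hlt
  set A : ℝ := (p i - z i) - (p j - z j) with hA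
  have hAneg : A < 0 := by simp [hA]; linarith
  set ε : ℝ := min (p j) (-A/2) with hεdef
  have hji : j ≠ i := Ne.symm hne
  have hε : 0 < ε := lt_min hpj (by linarith)
  have hεpj : ε ≤ p j := min_le_left _ _
  have hεA : ε ≤ -A/2 := min_le_right _ _
  set q : Fin K → ℝ := fun k => if k = i then p i + ε else if k = j then p j - ε else p k
    with hqdef
  have hq : ∀ k, q k = p k + ((if k = i then ε else 0) - (if k = j then ε else 0)) := by
    intro k
    by_cases h1 : k = i
    · have : k ≠ j := h1 ▸ hne
      simp [hqdef, h1, this, hne, hji]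
    · by_cases h2 : k = j
      · simp [hqdef, h1, h2, hne, hji]; ring
      · simp [hqdef, h1, h2]
  have hqsimplex : q ∈ simplex K := by
    constructor
    · have : ∑ k, q k = ∑ k, p k + ((∑ k, if k = i then ε else 0) -
          (∑ k, if k = j then ε else 0)) := by
        rw [← Finset.sum_sub_distrib, ← Finset.sum_add_distrib]
        exact Finset.sum_congr rfl fun k _ => hq k
      rw [this, Finset.sum_ite_eq' univ i (fun _ => ε), Finset.sum_ite_eq' univ j (fun _ => ε)]
      simp [h.1.1]
    · intro k
      by_cases h1 : k = i
      · have := h.1.2 k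
        simp [hqdef, h1, hne, hji]
        have hki : p k = p i := by rw [h1]
        linarith
      · by_cases h2 : k = j
        · have hkj : p k = p j := by rw [h2]
          simp [hqdef, h1, h2, hne, hji]
          linarith
        · simpa [hqdef, h1, h2] using h.1.2 k
  have hopt := h.2 q hqsimplex
  have hdiff : ∀ k, (q k - z k)^2 - (p k - z k)^2 =
      (if k = i then 2*(p i - z i)*ε + ε^2 else 0) +
      (if k = j then -2*(p j - z j)*ε + ε^2 else 0) := by
    intro k
    by_cases h1 : k = i
    · have hkj : k ≠ j := h1 ▸ hne
      simp only [hqdef, if_pos h1, if_neg hkj, h1, if_neg hne, if_true]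
      ring
    · by_cases h2 : k = j
      · simp only [hqdef, if_neg h1, if_pos h2, h2, if_neg hji, if_true]
        ring
      · simp [hqdef, h1, h2]
  have hsum : ∑ k, ((q k - z k)^2 - (p k - z k)^2) = 2*ε*A + 2*ε^2 := by
    rw [Finset.sum_congr rfl fun k _ => hdiff k, Finset.sum_add_distrib,
      Finset.sum_ite_eq' univ i, Finset.sum_ite_eq' univ j]
    simp [hA]
    ring
  have hsum2 : (0:ℝ) ≤ 2*ε*A + 2*ε^2 := by
    rw [← hsum, Finset.sum_sub_distrib]
    linarith
  nlinarith

theorem stmt8 {K : ℕ} (z p : Fin K → ℝ) (h : IsSparsemax z p)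
    (i j : Fin K) (hij : z i ≤ z j) :
    0 ≤ p j - p i ∧ p j - p i ≤ z j - z i := by
  by_cases hne : i = j
  · subst hne; constructor <;> linarith
  · have hpi := h.1.2 i
    have hpj := h.1.2 j
    have hlow : 0 ≤ p j - p i := by
      by_contra hc
      push_neg at hc
      have hpi' : 0 < p i := by linarith
      have := sparsemax_key z p h j i (Ne.symm hne) hpi'
      linarith
    refine ⟨hlow, ?_⟩
    rcases lt_or_ge (p i) (p j) with hlt | hle
    · have hpj' : 0 < p j := by linarith
      have := sparsemax_key z p h i j hne hpj'
      linarith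
    · linarith
end

section
/- softmax satisfies: if z_i ≤ z_j then 0 ≤ softmax_j(z) − softmax_i(z) ≤ (z_j − z_i)/2. -/
noncomputable def softmax {K : ℕ} (z : Fin K → ℝ) (i : Fin K) : ℝ :=
  Real.exp (z i) / ∑ k, Real.exp (z k)

/-!
The difference `softmax z j - softmax z i` is `(exp (z j) - exp (z i)) / ∑ k, exp (z k)`, and the
denominator is at least `exp (z i) + exp (z j)`. Writing `z i = m - x`, `z j = m + x`, the quotient
`(exp (z j) - exp (z i)) / (exp (z i) + exp (z j))` is `tanh x`, and `tanh x ≤ x` for `x ≥ 0`.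
-/

open Real

theorem Real.sinh_le_mul_cosh {x : ℝ} (hx : 0 ≤ x) : sinh x ≤ x * cosh x := by
  have hmono : MonotoneOn (fun t => t * cosh t - sinh t) (Set.Ici 0) := by
    refine monotoneOn_of_hasDerivWithinAt_nonneg (convex_Ici 0) (by fun_prop)
      (fun t _ => (((hasDerivAt_id t).mul (hasDerivAt_cosh t)).sub
        (hasDerivAt_sinh t)).hasDerivWithinAt) fun t ht => ?_
    rw [interior_Ici, Set.mem_Ioi] at ht
    have : 0 ≤ t * sinh t := mul_nonneg ht.le (sinh_nonneg_iff.2 ht.le)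
    simpa using this
  simpa using hmono Set.self_mem_Ici hx hx

theorem Real.exp_sub_exp_le_mul_add {a b : ℝ} (hab : a ≤ b) :
    exp b - exp a ≤ (b - a) * (exp a + exp b) / 2 := by
  obtain ⟨m, x, hx, rfl, rfl⟩ : ∃ m x, 0 ≤ x ∧ a = m - x ∧ b = m + x :=
    ⟨(a + b) / 2, (b - a) / 2, by linarith, by ring, by ring⟩
  -- after factoring out `exp m`, this is `sinh x ≤ x * cosh x`
  have h := mul_le_mul_of_nonneg_left (sinh_le_mul_cosh hx) (by positivity : (0 : ℝ) ≤ exp m)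
  rw [sinh_eq, cosh_eq] at h
  rw [sub_eq_add_neg m x, exp_add, exp_add]
  linarith

theorem softmax_sub_softmax {K : ℕ} (z : Fin K → ℝ) (i j : Fin K) :
    softmax z j - softmax z i = (exp (z j) - exp (z i)) / ∑ k, exp (z k) :=
  div_sub_div_same _ _ _

theorem stmt9 {K : ℕ} (z : Fin K → ℝ) (i j : Fin K) (hij : z i ≤ z j) :
    0 ≤ softmax z j - softmax z i ∧
    softmax z j - softmax z i ≤ (z j - z i) / 2 := by
  have hexp : 0 ≤ exp (z j) - exp (z i) := sub_nonneg.2 (exp_le_exp.2 hij)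
  rw [softmax_sub_softmax]
  refine ⟨div_nonneg hexp (by positivity), ?_⟩
  rcases eq_or_ne i j with rfl | hne
  · simp
  have hpair : 0 < exp (z i) + exp (z j) := by positivity
  calc (exp (z j) - exp (z i)) / ∑ k, exp (z k)
      ≤ (exp (z j) - exp (z i)) / (exp (z i) + exp (z j)) :=
        div_le_div_of_nonneg_left hexp hpair
          (Finset.add_le_sum (fun k _ => (exp_pos _).le)
            (Finset.mem_univ i) (Finset.mem_univ j) hne)
    _ ≤ (z j - z i) / 2 := by
        rw [div_le_iff₀ hpair, div_mul_eq_mul_div]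
        exact exp_sub_exp_le_mul_add hij
end

section
/- The sparsemax loss L(z; k) := −z_k + (1/2)∑_{j ∈ S(z)}(z_j² − τ(z)²) + 1/2 is a convex function of z ∈ ℝ^K. -/
/-!
The map `z ↦ ½ ∑_{j ∈ S(z)} (z_j² − τ(z)²)` is the convex conjugate of `q ↦ ½‖q‖²` restricted to
the probability simplex: it equals `max_{q ∈ Δ} (⟨q, z⟩ − ½‖q‖²)`, the maximum being attained at
`q = sparsemax z = [z − τ(z)]₊`. A pointwise maximum of affine functions of `z` is convex, and the
remaining terms `−z_k + ½` of the loss are affine.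
-/

open Finset Set

theorem ConvexOn.of_le_of_exists_eq {𝕜 E β ι : Type*} [Semiring 𝕜] [PartialOrder 𝕜]
    [AddCommMonoid E] [SMul 𝕜 E] [AddCommMonoid β] [PartialOrder β] [IsOrderedAddMonoid β]
    [SMul 𝕜 β] [PosSMulMono 𝕜 β] {s : Set E} {f : E → β} {g : ι → E → β}
    (hg : ∀ i, ConvexOn 𝕜 s (g i)) (hs : Convex 𝕜 s) (hle : ∀ i, ∀ x ∈ s, g i x ≤ f x)
    (heq : ∀ x ∈ s, ∃ i, g i x = f x) : ConvexOn 𝕜 s f := by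
  refine ⟨hs, fun x hx y hy a b ha hb hab => ?_⟩
  obtain ⟨i, hi⟩ := heq _ (hs hx hy ha hb hab)
  calc f (a • x + b • y) = g i (a • x + b • y) := hi.symm
    _ ≤ a • g i x + b • g i y := (hg i).2 hx hy ha hb hab
    _ ≤ a • f x + b • f y := by gcongr <;> exact hle i _ ‹_›

section SimplexConjugate

variable {ι : Type*} [Fintype ι]

noncomputable def innerSubHalfSq (q z : ι → ℝ) : ℝ := ∑ j, (q j * z j - q j ^ 2 / 2)

theorem convexOn_innerSubHalfSq (q : ι → ℝ) : ConvexOn ℝ univ (innerSubHalfSq q) := by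
  refine ⟨convex_univ, fun x _ y _ a b _ _ hab => le_of_eq ?_⟩
  simp only [innerSubHalfSq, Pi.add_apply, Pi.smul_apply, smul_eq_mul, Finset.mul_sum,
    ← Finset.sum_add_distrib]
  exact sum_congr rfl fun j _ => by linear_combination (q j ^ 2 / 2) * hab

theorem mul_sub_sq_div_two_le_max (z q t : ℝ) (hq : 0 ≤ q) :
    q * z - q ^ 2 / 2 ≤ max 0 (z - t) * z - max 0 (z - t) ^ 2 / 2 + t * (q - max 0 (z - t)) := by
  rcases le_or_gt z t with h | h
  · rw [max_eq_left (by linarith)]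
    nlinarith [sq_nonneg q, mul_nonneg hq (sub_nonneg.2 h)]
  · rw [max_eq_right (by linarith)]
    nlinarith [sq_nonneg (q - (z - t))]

theorem innerSubHalfSq_le_of_mem_stdSimplex {q z : ι → ℝ} {t : ℝ} (hq : q ∈ stdSimplex ℝ ι)
    (ht : ∑ j, max 0 (z j - t) = 1) :
    innerSubHalfSq q z ≤ innerSubHalfSq (fun j => max 0 (z j - t)) z := by
  -- summed over `j`, the multiplier terms `t * (q j - [z j - t]₊)` cancel since both sum to `1`
  have h := sum_le_sum fun j (_ : j ∈ Finset.univ) =>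
    mul_sub_sq_div_two_le_max (z j) (q j) t (hq.1 j)
  rwa [sum_add_distrib, ← mul_sum, sum_sub_distrib q, hq.2, ht, sub_self, mul_zero,
    add_zero] at h

theorem half_sum_filter_sq_sub_sq (z : ι → ℝ) (t : ℝ) :
    (1 / 2) * ∑ j ∈ univ.filter (fun j => t < z j), (z j ^ 2 - t ^ 2)
      = innerSubHalfSq (fun j => max 0 (z j - t)) z := by
  rw [innerSubHalfSq, mul_sum, sum_filter]
  refine sum_congr rfl fun j _ => ?_
  rcases le_or_gt (z j) t with h | h
  · rw [if_neg (not_lt.2 h), max_eq_left (by linarith)]; ring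
  · rw [if_pos h, max_eq_right (by linarith)]; ring

end SimplexConjugate

theorem stmt16 {K : ℕ} (τ : (Fin K → ℝ) → ℝ)
    (hτ : ∀ w : Fin K → ℝ, (∑ j, max 0 (w j - τ w)) = 1) (k : Fin K) :
    ConvexOn ℝ Set.univ (fun z : Fin K → ℝ =>
      -z k + (1 / 2) * ∑ j ∈ Finset.univ.filter (fun j => τ z < z j),
        (z j ^ 2 - τ z ^ 2) + 1 / 2) := by
  have hsparsemax : ∀ z, (fun j => max 0 (z j - τ z)) ∈ stdSimplex ℝ (Fin K) :=
    fun z => ⟨fun _ => le_max_left _ _, hτ z⟩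
  have hconj : ConvexOn ℝ univ fun z : Fin K → ℝ =>
      (1 / 2) * ∑ j ∈ univ.filter (fun j => τ z < z j), (z j ^ 2 - τ z ^ 2) := by
    simp only [half_sum_filter_sq_sub_sq]
    exact .of_le_of_exists_eq (g := fun q : stdSimplex ℝ (Fin K) => innerSubHalfSq q.1)
      (fun q => convexOn_innerSubHalfSq q.1) convex_univ
      (fun q z _ => innerSubHalfSq_le_of_mem_stdSimplex q.2 (hτ z))
      (fun z _ => ⟨⟨_, hsparsemax z⟩, rfl⟩)
  have hlin : ConvexOn ℝ univ fun z : Fin K → ℝ => -z k :=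
    (-LinearMap.proj k : (Fin K → ℝ) →ₗ[ℝ] ℝ).convexOn convex_univ
  exact (hlin.add hconj).add_const _
end

section
/- The sparsemax loss is translation invariant: L(z + c·1; k) = L(z; k) for all c ∈ ℝ. -/
/-! The threshold of `z + c•1` is `τ z + c`, because the map `t ↦ ∑ⱼ max 0 (zⱼ - t)` is strictly
decreasing wherever it is positive, so the normalisation `∑ⱼ max 0 (zⱼ - τ z) = 1` pins `τ z` down.
Hence the support does not move, and on it the squares change by
`(zⱼ + c)² - (τ + c)² = (zⱼ² - τ²) + 2c (zⱼ - τ)`; since `∑ⱼ (zⱼ - τ)` over the support is `1`,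
the factor `1/2` turns the extra terms into `c`, which cancels the shift of `-z_k`. -/

open Finset

section Threshold

variable {ι : Type*} [Fintype ι]

lemma sum_max_sub_lt_of_lt {w : ι → ℝ} {s t : ℝ} (hst : s < t)
    (ht : 0 < ∑ j, max 0 (w j - t)) :
    ∑ j, max 0 (w j - t) < ∑ j, max 0 (w j - s) := by
  obtain ⟨j, -, hj⟩ := exists_lt_of_sum_lt (f := fun _ ↦ (0 : ℝ)) (by simpa using ht)
  refine sum_lt_sum (fun i _ ↦ max_le_max le_rfl (by linarith)) ⟨j, mem_univ j, ?_⟩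
  have hjt : 0 < w j - t := by simpa using hj
  rw [max_eq_right hjt.le, max_eq_right (by linarith)]
  linarith

lemma eq_of_sum_max_sub_eq {w : ι → ℝ} {s t : ℝ}
    (h : ∑ j, max 0 (w j - s) = ∑ j, max 0 (w j - t)) (hpos : 0 < ∑ j, max 0 (w j - s)) :
    s = t := by
  rcases lt_trichotomy s t with hst | hst | hst
  · exact absurd h (sum_max_sub_lt_of_lt hst (h ▸ hpos)).ne'
  · exact hst
  · exact absurd h (sum_max_sub_lt_of_lt hst hpos).ne

lemma sum_filter_lt_sub_eq_sum_max (w : ι → ℝ) (t : ℝ) :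
    ∑ j ∈ univ.filter (fun j ↦ t < w j), (w j - t) = ∑ j, max 0 (w j - t) := by
  rw [sum_filter]
  refine sum_congr rfl fun j _ ↦ ?_
  split_ifs with h
  · rw [max_eq_right (by linarith)]
  · rw [max_eq_left (by linarith [not_lt.mp h])]

end Threshold

theorem stmt17 {K : ℕ} (τ : (Fin K → ℝ) → ℝ)
    (hτ : ∀ w : Fin K → ℝ, (∑ j, max 0 (w j - τ w)) = 1) (k : Fin K)
    (L : (Fin K → ℝ) → ℝ)
    (hL : ∀ z, L z = -z k + (1 / 2) * ∑ j ∈ Finset.univ.filter (fun j => τ z < z j),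
        (z j ^ 2 - τ z ^ 2) + 1 / 2)
    (z : Fin K → ℝ) (c : ℝ) :
    L (fun i => z i + c) = L z := by
  have hshift : τ (fun i ↦ z i + c) = τ z + c := by
    refine eq_of_sum_max_sub_eq ?_ (by rw [hτ]; exact one_pos)
    simp only [add_sub_add_right_eq_sub, hτ]
  have hsupport : univ.filter (fun j ↦ τ (fun i ↦ z i + c) < z j + c)
      = univ.filter (fun j ↦ τ z < z j) := by
    simp only [hshift, add_lt_add_iff_right]
  have hmass : ∑ j ∈ univ.filter (fun j ↦ τ z < z j), (z j - τ z) = 1 :=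
    (sum_filter_lt_sub_eq_sum_max z (τ z)).trans (hτ z)
  have hsq : ∀ j, (z j + c) ^ 2 - (τ z + c) ^ 2 = (z j ^ 2 - τ z ^ 2) + 2 * c * (z j - τ z) :=
    fun j ↦ by ring
  rw [hL, hL z, hsupport, hshift]
  simp only [hsq, sum_add_distrib, ← mul_sum, hmass]
  ring
end

section
/- The sparsemax loss is nonnegative, and the following are equivalent: (i) L(z; k) = 0; (ii) sparsemax(z) = δ_k (the delta distribution on k); (iii) z_k ≥ 1 + max_{j ≠ k} z_j. -/
/-!
Write `p = sparsemax z`, a probability vector since `τ z` is the simplex threshold, and `δ = δ_k`.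
Since `z_j² - τ² = p_j² + 2 τ p_j` on the support and `∑ p_j = 1`, the loss rearranges to
`L = (p_k - (z_k - τ)) + ½ ‖p - δ‖²`, a sum of two nonnegative terms. Both vanish exactly when
`p = δ`, i.e. when the threshold is `z_k - 1` and every other `z_j` lies below it: the margin
condition. Conversely, under the margin condition `∑ p_j = 1` pins the threshold down to `z_k - 1`.
-/

open Finset

section Sparsemax

variable {ι : Type*} [Fintype ι]

theorem ite_sq_sub_sq_eq (x t : ℝ) :
    (if t < x then x ^ 2 - t ^ 2 else 0) = max 0 (x - t) ^ 2 + 2 * t * max 0 (x - t) := by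
  split_ifs with h
  · rw [max_eq_right (sub_nonneg.mpr h.le)]; ring
  · rw [max_eq_left (sub_nonpos.mpr (not_lt.mp h))]; ring

theorem sum_filter_sq_sub_sq (z : ι → ℝ) (t : ℝ) :
    ∑ j ∈ univ.filter (fun j => t < z j), (z j ^ 2 - t ^ 2)
      = ∑ j, max 0 (z j - t) ^ 2 + 2 * t * ∑ j, max 0 (z j - t) := by
  simp only [sum_filter, ite_sq_sub_sq_eq, sum_add_distrib, mul_sum]

theorem max_zero_sub_eq_one {x t : ℝ} (h : max 0 (x - t) = 1) : x - t = 1 := by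
  rcases le_total (x - t) 0 with hx | hx
  · rw [max_eq_left hx] at h; norm_num at h
  · rwa [max_eq_right hx] at h

variable (z : ι → ℝ) (t : ℝ) (k : ι)

theorem sum_max_zero_sub_eq_of_margin (hmargin : ∀ j, j ≠ k → 1 + z j ≤ z k)
    (ht : z k - 1 ≤ t) : ∑ j, max 0 (z j - t) = max 0 (z k - t) :=
  sum_eq_single k (fun j _ hj => max_eq_left (by linarith [hmargin j hj]))
    (fun hk => absurd (mem_univ k) hk)

theorem threshold_eq_of_margin (hsum : ∑ j, max 0 (z j - t) = 1)
    (hmargin : ∀ j, j ≠ k → 1 + z j ≤ z k) : t = z k - 1 := by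
  rcases le_or_gt (z k - 1) t with ht | ht
  · rw [sum_max_zero_sub_eq_of_margin z t k hmargin ht] at hsum
    linarith [max_zero_sub_eq_one hsum]
  · have hk : max 0 (z k - t) ≤ 1 :=
      hsum ▸ single_le_sum (fun j _ => le_max_left 0 (z j - t)) (mem_univ k)
    linarith [le_max_right 0 (z k - t)]

/-- `L(z; k)`, with `t` standing for the threshold `τ(z)`. -/
noncomputable def sparsemaxLoss : ℝ :=
  -z k + (1 / 2) * ∑ j ∈ univ.filter (fun j => t < z j), (z j ^ 2 - t ^ 2) + 1 / 2

variable [DecidableEq ι]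

theorem sum_sq_sub_indicator (p : ι → ℝ) :
    ∑ j, (p j - if j = k then 1 else 0) ^ 2 = ∑ j, p j ^ 2 - 2 * p k + 1 := by
  have hexpand : ∀ j, (p j - if j = k then (1 : ℝ) else 0) ^ 2
      = p j ^ 2 - 2 * (if j = k then p j else 0) + (if j = k then 1 else 0) := by
    intro j; split_ifs <;> ring
  simp only [hexpand, sum_add_distrib, sum_sub_distrib, ← mul_sum, sum_ite_eq', mem_univ,
    if_true]

theorem sparsemaxLoss_eq (hsum : ∑ j, max 0 (z j - t) = 1) :
    sparsemaxLoss z t k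
      = (max 0 (z k - t) - (z k - t))
        + (1 / 2) * ∑ j, (max 0 (z j - t) - if j = k then 1 else 0) ^ 2 := by
  rw [sparsemaxLoss, sum_filter_sq_sub_sq, sum_sq_sub_indicator, hsum]; ring

theorem sparsemaxLoss_nonneg (hsum : ∑ j, max 0 (z j - t) = 1) :
    0 ≤ sparsemaxLoss z t k := by
  rw [sparsemaxLoss_eq z t k hsum]
  have hgap := le_max_right 0 (z k - t)
  have hdist := sum_nonneg fun j (_ : j ∈ univ) =>
    sq_nonneg (max 0 (z j - t) - if j = k then (1 : ℝ) else 0)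
  linarith

theorem sparsemaxLoss_eq_zero_iff (hsum : ∑ j, max 0 (z j - t) = 1) :
    sparsemaxLoss z t k = 0 ↔
      (fun i => max 0 (z i - t)) = (fun i => if i = k then (1 : ℝ) else 0) := by
  rw [sparsemaxLoss_eq z t k hsum]
  have hgap := sub_nonneg.mpr (le_max_right 0 (z k - t))
  have hdist := sum_nonneg fun j (_ : j ∈ univ) =>
    sq_nonneg (max 0 (z j - t) - if j = k then (1 : ℝ) else 0)
  constructor
  · intro h0
    have hzero : ∑ j, (max 0 (z j - t) - if j = k then (1 : ℝ) else 0) ^ 2 = 0 := by linarith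
    funext i
    have hi := (sum_eq_zero_iff_of_nonneg fun j _ => sq_nonneg _).mp hzero i (mem_univ i)
    exact sub_eq_zero.mp (pow_eq_zero_iff two_ne_zero |>.mp hi)
  · intro hδ
    have hk : max 0 (z k - t) = 1 := by simpa using congrFun hδ k
    have hzero : ∑ j, (max 0 (z j - t) - if j = k then (1 : ℝ) else 0) ^ 2 = 0 :=
      sum_eq_zero fun j _ => by rw [congrFun hδ j, sub_self]; ring
    rw [hzero, hk, max_zero_sub_eq_one hk]; ring

theorem max_zero_sub_eq_indicator_iff (hsum : ∑ j, max 0 (z j - t) = 1) :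
    (fun i => max 0 (z i - t)) = (fun i => if i = k then (1 : ℝ) else 0) ↔
      ∀ j, j ≠ k → 1 + z j ≤ z k := by
  constructor
  · intro hδ j hj
    have hk := max_zero_sub_eq_one (by simpa using congrFun hδ k)
    have hj0 : max 0 (z j - t) = 0 := by simpa [hj] using congrFun hδ j
    linarith [le_max_right 0 (z j - t)]
  · intro hmargin
    obtain rfl := threshold_eq_of_margin z t k hsum hmargin
    funext i
    split_ifs with hi
    · subst hi; norm_num
    · exact max_eq_left (by linarith [hmargin i hi])

end Sparsemax

theorem stmt18 {K : ℕ} (τ : (Fin K → ℝ) → ℝ)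
    (hτ : ∀ w : Fin K → ℝ, (∑ j, max 0 (w j - τ w)) = 1) (k : Fin K)
    (z : Fin K → ℝ) (L : ℝ)
    (hL : L = -z k + (1 / 2) * ∑ j ∈ Finset.univ.filter (fun j => τ z < z j),
        (z j ^ 2 - τ z ^ 2) + 1 / 2) :
    0 ≤ L ∧
    (L = 0 ↔ (fun i => max 0 (z i - τ z)) = (fun i => if i = k then (1 : ℝ) else 0)) ∧
    (L = 0 ↔ ∀ j, j ≠ k → 1 + z j ≤ z k) := by
  subst hL
  have hδ := sparsemaxLoss_eq_zero_iff z (τ z) k (hτ z)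
  exact ⟨sparsemaxLoss_nonneg z (τ z) k (hτ z), hδ,
    hδ.trans (max_zero_sub_eq_indicator_iff z (τ z) k (hτ z))⟩
end

section
/- In the binary case K = 2 with correct label 1 and t := z₁ − z₂, the sparsemax loss reduces to the modified Huber loss: L(t) = 0 if t ≥ 1, L(t) = −t if t ≤ −1, and L(t) = (t−1)²/4 if −1 < t < 1; moreover this function is continuous, convex, and differentiable everywhere. -/
/-!
On the support, `z_j² - τ² = (z_j - τ)² + 2τ (z_j - τ)`; summing and using `∑ (z_j - τ)₊ = 1`
turns the loss into `-(z_k - τ) + 1/2 + (1/2) ∑ (z_j - τ)₊²`. In the binary case, with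
`u = z₁ - τ` and `v = z₂ - τ`, the three possible sign patterns of `(u, v)` give the three
branches of the modified Huber loss in `t = u - v`.

The modified Huber loss is `((1 - t)₊² - (-1 - t)₊²) / 4`, whose derivative
`((-1 - t)₊ - (1 - t)₊) / 2` exists everywhere and is nondecreasing, hence convexity.
-/

open Finset Set

noncomputable def modifiedHuber (t : ℝ) : ℝ :=
  if 1 ≤ t then 0 else if t ≤ -1 then -t else (t - 1) ^ 2 / 4

theorem modifiedHuber_eq_sq_max_zero (t : ℝ) :
    modifiedHuber t = (max 0 (1 - t) ^ 2 - max 0 (-1 - t) ^ 2) / 4 := by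
  unfold modifiedHuber
  split_ifs with h₁ h₂
  · rw [max_eq_left (by linarith), max_eq_left (by linarith)]
    ring
  · rw [max_eq_right (by linarith), max_eq_right (by linarith)]
    ring
  · rw [max_eq_right (by linarith), max_eq_left (by linarith)]
    ring

theorem hasDerivAt_sq_max_zero (x : ℝ) :
    HasDerivAt (fun y : ℝ => max 0 y ^ 2) (2 * max 0 x) x := by
  refine hasDerivAt_of_hasDerivAt_of_ne' (g := fun y => 2 * max 0 y) (x := 0) (fun y hy => ?_)
    (by fun_prop) (by fun_prop) x
  rcases hy.lt_or_gt with hy | hy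
  · have hzero : (fun y : ℝ => max 0 y ^ 2) =ᶠ[nhds y] fun _ => 0 := by
      filter_upwards [Iio_mem_nhds hy] with w hw
      rw [max_eq_left (le_of_lt hw), sq, mul_zero]
    rw [max_eq_left hy.le, mul_zero]
    exact (hasDerivAt_const y 0).congr_of_eventuallyEq hzero
  · have hsq : (fun y : ℝ => max 0 y ^ 2) =ᶠ[nhds y] fun w => w ^ 2 := by
      filter_upwards [Ioi_mem_nhds hy] with w hw
      rw [max_eq_right (le_of_lt hw)]
    rw [max_eq_right hy.le]
    simpa using (hasDerivAt_pow 2 y).congr_of_eventuallyEq hsq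

theorem hasDerivAt_modifiedHuber (t : ℝ) :
    HasDerivAt modifiedHuber ((max 0 (-1 - t) - max 0 (1 - t)) / 2) t := by
  rw [show modifiedHuber = _ from funext modifiedHuber_eq_sq_max_zero]
  have h₁ := (hasDerivAt_sq_max_zero (1 - t)).comp t ((hasDerivAt_id t).const_sub 1)
  have h₂ := (hasDerivAt_sq_max_zero (-1 - t)).comp t ((hasDerivAt_id t).const_sub (-1))
  exact ((h₁.sub h₂).div_const 4).congr_deriv (by ring)

theorem differentiable_modifiedHuber : Differentiable ℝ modifiedHuber :=
  fun t => (hasDerivAt_modifiedHuber t).differentiableAt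

theorem convexOn_modifiedHuber : ConvexOn ℝ univ modifiedHuber := by
  refine Monotone.convexOn_univ_of_deriv differentiable_modifiedHuber ?_
  rw [show deriv modifiedHuber = _ from funext fun t => (hasDerivAt_modifiedHuber t).deriv]
  intro a b hab
  simp only [max_def]
  split_ifs <;> linarith

theorem sum_filter_lt_sq_sub_sq {ι : Type*} [Fintype ι] (z : ι → ℝ) (τ : ℝ) :
    ∑ j ∈ univ.filter (fun j => τ < z j), (z j ^ 2 - τ ^ 2) =
      ∑ j, max 0 (z j - τ) ^ 2 + 2 * τ * ∑ j, max 0 (z j - τ) := by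
  rw [sum_filter, mul_sum, ← sum_add_distrib]
  refine sum_congr rfl fun j _ => ?_
  split_ifs with hj
  · rw [max_eq_right (by linarith)]
    ring
  · rw [max_eq_left (by linarith)]
    ring

theorem binary_sparsemax_loss_eq_modifiedHuber {u v : ℝ} (h : max 0 u + max 0 v = 1) :
    -u + (max 0 u ^ 2 + max 0 v ^ 2) / 2 + 1 / 2 = modifiedHuber (u - v) := by
  unfold modifiedHuber
  rcases le_or_gt u 0 with hu | hu <;> rcases le_or_gt v 0 with hv | hv
  · rw [max_eq_left hu, max_eq_left hv] at h
    norm_num at h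
  · rw [max_eq_left hu, max_eq_right hv.le] at h ⊢
    rw [if_neg (by linarith), if_pos (by linarith)]
    nlinarith
  · rw [max_eq_right hu.le, max_eq_left hv] at h ⊢
    rw [if_pos (by linarith)]
    nlinarith
  · rw [max_eq_right hu.le, max_eq_right hv.le] at h ⊢
    rw [if_neg (by linarith), if_neg (by linarith)]
    obtain rfl : v = 1 - u := by linarith
    ring

theorem stmt19 (τ : (Fin 2 → ℝ) → ℝ)
    (hτ : ∀ w : Fin 2 → ℝ, (∑ j, max 0 (w j - τ w)) = 1)
    (h : ℝ → ℝ)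
    (hh : ∀ t, h t = if 1 ≤ t then 0 else if t ≤ -1 then -t else (t - 1) ^ 2 / 4) :
    (∀ z : Fin 2 → ℝ,
      -z 0 + (1 / 2) * ∑ j ∈ Finset.univ.filter (fun j => τ z < z j),
        (z j ^ 2 - τ z ^ 2) + 1 / 2 = h (z 0 - z 1)) ∧
    Continuous h ∧ ConvexOn ℝ Set.univ h ∧ Differentiable ℝ h := by
  obtain rfl : h = modifiedHuber := funext hh
  refine ⟨fun z => ?_, differentiable_modifiedHuber.continuous, convexOn_modifiedHuber,
    differentiable_modifiedHuber⟩
  have hsimplex := hτ z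
  rw [sum_filter_lt_sq_sub_sq, hsimplex, Fin.sum_univ_two]
  rw [Fin.sum_univ_two] at hsimplex
  have hloss := binary_sparsemax_loss_eq_modifiedHuber hsimplex
  rw [sub_sub_sub_cancel_right] at hloss
  linarith
end
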